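/- arXiv:2311.07269 — 3 statements merged into one kernel-verified Lean document; each statement's English description precedes it below -/
import Mathlib

section
/- Let ≿ satisfy A.1–A.4 and certainty-independence A.2 (for all x, y ∈ ℓ∞, h ∈ ℝ, α ∈ (0,1): x ≿ y iff αx + (1-α)h𝟏 ≿ αy + (1-α)h𝟏). Then the certainty-equivalent utility U is positively homogeneous: U(λx) = λU(x) for all λ ≥ 0 and x ∈ ℓ∞. -/
open BoundedContinuousFunction

/-- Under axioms A.1–A.4 and certainty-independence A.2, the certainty-equivalent utility
is positively homogeneous. -/
theorem stmt12 (R : (ℕ →ᵇ ℝ) → (ℕ →ᵇ ℝ) → Prop) (U : (ℕ →ᵇ ℝ) → ℝ)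
    (hcomp : ∀ x y, R x y ∨ R y x)
    (htrans : ∀ x y z, R x y → R y z → R x z)
    (hcont : ∀ x, IsClosed {y | R y x} ∧ IsClosed {y | R x y})
    (hmonoa : ∀ x y : ℕ →ᵇ ℝ, (∀ n, y n ≤ x n) → R x y)
    (hmonob : ∀ x y : ℕ →ᵇ ℝ, (∃ ε : ℝ, 0 < ε ∧ ∀ n, y n + ε ≤ x n) → (R x y ∧ ¬ R y x))
    (hci : ∀ (x y : ℕ →ᵇ ℝ) (h α : ℝ), 0 < α → α < 1 →
      (R x y ↔ R (α • x + (1 - α) • (h • (1 : ℕ →ᵇ ℝ)))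
                 (α • y + (1 - α) • (h • (1 : ℕ →ᵇ ℝ)))))
    (hU : ∀ x : ℕ →ᵇ ℝ, R (U x • (1 : ℕ →ᵇ ℝ)) x ∧ R x (U x • (1 : ℕ →ᵇ ℝ))) :
    ∀ (l : ℝ), 0 ≤ l → ∀ x : ℕ →ᵇ ℝ, U (l • x) = l * U x := by
  -- uniqueness of certainty equivalents
  have uniq : ∀ (a b : ℝ) (y : ℕ →ᵇ ℝ),
      R (a • (1 : ℕ →ᵇ ℝ)) y → R y (a • (1 : ℕ →ᵇ ℝ)) →
      R (b • (1 : ℕ →ᵇ ℝ)) y → R y (b • (1 : ℕ →ᵇ ℝ)) → a = b := by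
    intro a b y ha1 ha2 hb1 hb2
    by_contra hne
    rcases lt_or_gt_of_ne hne with h | h
    · have hs := hmonob (b • (1 : ℕ →ᵇ ℝ)) (a • (1 : ℕ →ᵇ ℝ))
        ⟨b - a, by linarith, fun n => by simp⟩
      exact hs.2 (htrans _ _ _ ha1 hb2)
    · have hs := hmonob (a • (1 : ℕ →ᵇ ℝ)) (b • (1 : ℕ →ᵇ ℝ))
        ⟨a - b, by linarith, fun n => by simp⟩
      exact hs.2 (htrans _ _ _ hb1 ha2)
  -- scaling for α ∈ (0,1)
  have scale : ∀ (α : ℝ), 0 < α → α < 1 → ∀ x : ℕ →ᵇ ℝ, U (α • x) = α * U x := by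
    intro α h0 h1 x
    have key : ∀ y : ℕ →ᵇ ℝ, α • y + (1 - α) • ((0 : ℝ) • (1 : ℕ →ᵇ ℝ)) = α • y := by
      intro y; simp
    have h1' := (hci x (U x • (1 : ℕ →ᵇ ℝ)) 0 α h0 h1).mp (hU x).2
    have h2' := (hci (U x • (1 : ℕ →ᵇ ℝ)) x 0 α h0 h1).mp (hU x).1
    rw [key, key] at h1' h2'
    rw [smul_smul] at h1' h2'
    exact uniq (U (α • x)) (α * U x) (α • x) (hU (α • x)).1 (hU (α • x)).2 h2' h1'
  intro l hl x
  rcases eq_or_lt_of_le hl with h0 | h0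
  · -- l = 0
    have : (0 : ℝ) • x = (0 : ℝ) • (1 : ℕ →ᵇ ℝ) := by simp
    have hz1 := (hU ((0 : ℝ) • x)).1
    have hz2 := (hU ((0 : ℝ) • x)).2
    nth_rewrite 2 [this] at hz1
    nth_rewrite 1 [this] at hz2
    have := uniq (U ((0 : ℝ) • x)) 0 ((0 : ℝ) • (1 : ℕ →ᵇ ℝ)) hz1 hz2
      (hmonoa _ _ (fun n => by simp)) (hmonoa _ _ (fun n => by simp))
    rw [← h0]; simpa [← h0] using this
  rcases lt_trichotomy l 1 with hl1 | hl1 | hl1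
  · exact scale l h0 hl1 x
  · simp [hl1]
  · have h0' : 0 < (1 : ℝ) / l := by positivity
    have h1' : (1 : ℝ) / l < 1 := by
      rw [div_lt_one (by linarith)]; linarith
    have := scale ((1 : ℝ) / l) h0' h1' (l • x)
    rw [smul_smul, one_div_mul_cancel (by linarith), one_smul] at this
    field_simp at this
    linarith [this]
end

section
/- Let ≿ satisfy A.1–A.4 and certainty-independence A.2. Then the certainty-equivalent utility satisfies cash-invariance: U(x + t·𝟏) = U(x) + t for all x ∈ ℓ∞ and t ∈ ℝ. -/
open BoundedContinuousFunction

/-- Under axioms A.1–A.4 and certainty-independence A.2, the certainty-equivalent utility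
is cash-invariant: U(x + t·𝟏) = U(x) + t. -/
theorem stmt13 (R : (ℕ →ᵇ ℝ) → (ℕ →ᵇ ℝ) → Prop) (U : (ℕ →ᵇ ℝ) → ℝ)
    (hcomp : ∀ x y, R x y ∨ R y x)
    (htrans : ∀ x y z, R x y → R y z → R x z)
    (hcont : ∀ x, IsClosed {y | R y x} ∧ IsClosed {y | R x y})
    (hmonoa : ∀ x y : ℕ →ᵇ ℝ, (∀ n, y n ≤ x n) → R x y)
    (hmonob : ∀ x y : ℕ →ᵇ ℝ, (∃ ε : ℝ, 0 < ε ∧ ∀ n, y n + ε ≤ x n) → (R x y ∧ ¬ R y x))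
    (hci : ∀ (x y : ℕ →ᵇ ℝ) (h α : ℝ), 0 < α → α < 1 →
      (R x y ↔ R (α • x + (1 - α) • (h • (1 : ℕ →ᵇ ℝ)))
                 (α • y + (1 - α) • (h • (1 : ℕ →ᵇ ℝ)))))
    (hU : ∀ x : ℕ →ᵇ ℝ, R (U x • (1 : ℕ →ᵇ ℝ)) x ∧ R x (U x • (1 : ℕ →ᵇ ℝ))) :
    ∀ (x : ℕ →ᵇ ℝ) (t : ℝ), U (x + t • (1 : ℕ →ᵇ ℝ)) = U x + t := by
  intro x t
  set c := U x with hc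
  set d := U (x + t • (1 : ℕ →ᵇ ℝ)) with hd
  have e1 : (1/2 : ℝ) • (x + t • (1 : ℕ →ᵇ ℝ)) +
      (1 - 1/2 : ℝ) • ((c + t) • (1 : ℕ →ᵇ ℝ)) =
      (1/2 : ℝ) • x + (1 - 1/2 : ℝ) • ((c + 2*t) • (1 : ℕ →ᵇ ℝ)) := by
    module
  have e2 : (1/2 : ℝ) • ((c + t) • (1 : ℕ →ᵇ ℝ)) +
      (1 - 1/2 : ℝ) • ((c + t) • (1 : ℕ →ᵇ ℝ)) =
      (1/2 : ℝ) • (c • (1 : ℕ →ᵇ ℝ)) + (1 - 1/2 : ℝ) • ((c + 2*t) • (1 : ℕ →ᵇ ℝ)) := by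
    module
  have A := hci (x + t • (1 : ℕ →ᵇ ℝ)) ((c + t) • (1 : ℕ →ᵇ ℝ)) (c + t) (1/2)
    (by norm_num) (by norm_num)
  have A' := hci ((c + t) • (1 : ℕ →ᵇ ℝ)) (x + t • (1 : ℕ →ᵇ ℝ)) (c + t) (1/2)
    (by norm_num) (by norm_num)
  have B := hci x (c • (1 : ℕ →ᵇ ℝ)) (c + 2*t) (1/2) (by norm_num) (by norm_num)
  have B' := hci (c • (1 : ℕ →ᵇ ℝ)) x (c + 2*t) (1/2) (by norm_num) (by norm_num)
  rw [e1, e2] at A A'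
  have hx1 : R (x + t • (1 : ℕ →ᵇ ℝ)) ((c + t) • (1 : ℕ →ᵇ ℝ)) :=
    A.mpr (B.mp (hU x).2)
  have hx2 : R ((c + t) • (1 : ℕ →ᵇ ℝ)) (x + t • (1 : ℕ →ᵇ ℝ)) :=
    A'.mpr (B'.mp (hU x).1)
  have hd1 : R (d • (1 : ℕ →ᵇ ℝ)) ((c + t) • (1 : ℕ →ᵇ ℝ)) :=
    htrans _ _ _ (hU (x + t • (1 : ℕ →ᵇ ℝ))).1 hx1
  have hd2 : R ((c + t) • (1 : ℕ →ᵇ ℝ)) (d • (1 : ℕ →ᵇ ℝ)) :=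
    htrans _ _ _ hx2 (hU (x + t • (1 : ℕ →ᵇ ℝ))).2
  rcases lt_trichotomy d (c + t) with h | h | h
  · exfalso
    refine (hmonob ((c + t) • (1 : ℕ →ᵇ ℝ)) (d • (1 : ℕ →ᵇ ℝ))
      ⟨c + t - d, by linarith, fun n => by simp⟩).2 hd1
  · exact h
  · exfalso
    refine (hmonob (d • (1 : ℕ →ᵇ ℝ)) ((c + t) • (1 : ℕ →ᵇ ℝ))
      ⟨d - (c + t), by linarith, fun n => by simp⟩).2 hd2
end

section
/- Let ≿ satisfy A.1–A.5, where A.5 (uncertainty aversion) says x ∼ y implies αx + (1-α)y ≿ x for α ∈ (0,1). Then the certainty-equivalent utility U is superadditive: U(x + y) ≥ U(x) + U(y) for all x, y ∈ ℓ∞. -/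
open BoundedContinuousFunction

/-- Under axioms A.1–A.5 (adding uncertainty aversion), the certainty-equivalent utility
is superadditive. -/
theorem stmt14 (R : (ℕ →ᵇ ℝ) → (ℕ →ᵇ ℝ) → Prop) (U : (ℕ →ᵇ ℝ) → ℝ)
    (hcomp : ∀ x y, R x y ∨ R y x)
    (htrans : ∀ x y z, R x y → R y z → R x z)
    (hcont : ∀ x, IsClosed {y | R y x} ∧ IsClosed {y | R x y})
    (hmonoa : ∀ x y : ℕ →ᵇ ℝ, (∀ n, y n ≤ x n) → R x y)
    (hmonob : ∀ x y : ℕ →ᵇ ℝ, (∃ ε : ℝ, 0 < ε ∧ ∀ n, y n + ε ≤ x n) → (R x y ∧ ¬ R y x))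
    (hci : ∀ (x y : ℕ →ᵇ ℝ) (h α : ℝ), 0 < α → α < 1 →
      (R x y ↔ R (α • x + (1 - α) • (h • (1 : ℕ →ᵇ ℝ)))
                 (α • y + (1 - α) • (h • (1 : ℕ →ᵇ ℝ)))))
    (hua : ∀ (x y : ℕ →ᵇ ℝ) (α : ℝ), 0 < α → α < 1 →
      (R x y ∧ R y x) → R (α • x + (1 - α) • y) x)
    (hU : ∀ x : ℕ →ᵇ ℝ, R (U x • (1 : ℕ →ᵇ ℝ)) x ∧ R x (U x • (1 : ℕ →ᵇ ℝ))) :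
    ∀ x y : ℕ →ᵇ ℝ, U x + U y ≤ U (x + y) := by
  -- constants
  have hconst : ∀ s t : ℝ, s ≤ t → R (t • (1 : ℕ →ᵇ ℝ)) (s • (1 : ℕ →ᵇ ℝ)) := by
    intro s t hst
    apply hmonoa
    intro n
    simp [hst]
  have hconst_strict : ∀ s t : ℝ, s < t → ¬ R (s • (1 : ℕ →ᵇ ℝ)) (t • (1 : ℕ →ᵇ ℝ)) := by
    intro s t hst
    exact (hmonob (t • (1 : ℕ →ᵇ ℝ)) (s • (1 : ℕ →ᵇ ℝ))
      ⟨t - s, by linarith, fun n => by simp⟩).2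
  -- R x y implies U y ≤ U x
  have hUle : ∀ x y, R x y → U y ≤ U x := by
    intro x y hxy
    by_contra hlt
    push_neg at hlt
    have h1 : R (U x • (1 : ℕ →ᵇ ℝ)) (U y • (1 : ℕ →ᵇ ℝ)) :=
      htrans _ _ _ (htrans _ _ _ (hU x).1 hxy) (hU y).2
    exact hconst_strict (U x) (U y) hlt h1
  -- U y ≤ U x implies R x y
  have hRU : ∀ x y, U y ≤ U x → R x y := by
    intro x y hle
    exact htrans _ _ _ (htrans _ _ _ (hU x).2 (hconst _ _ hle)) (hU y).1
  have hUeq : ∀ x y, R x y → R y x → U x = U y := fun x y h1 h2 =>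
    le_antisymm (hUle y x h2) (hUle x y h1)
  -- U of constants
  have hUconst : ∀ t : ℝ, U (t • (1 : ℕ →ᵇ ℝ)) = t := by
    intro t
    rcases lt_trichotomy (U (t • (1 : ℕ →ᵇ ℝ))) t with h | h | h
    · exact absurd (hU (t • (1 : ℕ →ᵇ ℝ))).1 (hconst_strict _ _ h)
    · exact h
    · exact absurd (hU (t • (1 : ℕ →ᵇ ℝ))).2 (hconst_strict _ _ h)
  -- mixing with constants
  have hmix : ∀ (x : ℕ →ᵇ ℝ) (h α : ℝ), 0 < α → α < 1 →
      U (α • x + (1 - α) • (h • (1 : ℕ →ᵇ ℝ))) = α * U x + (1 - α) * h := by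
    intro x h α hα0 hα1
    have hc : α • (U x • (1 : ℕ →ᵇ ℝ)) + (1 - α) • (h • (1 : ℕ →ᵇ ℝ))
        = (α * U x + (1 - α) * h) • (1 : ℕ →ᵇ ℝ) := by
      ext n; simp
    have h1 : R (α • x + (1 - α) • (h • (1 : ℕ →ᵇ ℝ)))
        ((α * U x + (1 - α) * h) • (1 : ℕ →ᵇ ℝ)) := by
      have := (hci x (U x • (1 : ℕ →ᵇ ℝ)) h α hα0 hα1).1 (hU x).2
      rwa [hc] at this
    have h2 : R ((α * U x + (1 - α) * h) • (1 : ℕ →ᵇ ℝ))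
        (α • x + (1 - α) • (h • (1 : ℕ →ᵇ ℝ))) := by
      have := (hci (U x • (1 : ℕ →ᵇ ℝ)) x h α hα0 hα1).1 (hU x).1
      rwa [hc] at this
    calc U (α • x + (1 - α) • (h • (1 : ℕ →ᵇ ℝ)))
        = U ((α * U x + (1 - α) * h) • (1 : ℕ →ᵇ ℝ)) := hUeq _ _ h1 h2
      _ = α * U x + (1 - α) * h := hUconst _
  -- doubling
  have hdouble : ∀ z : ℕ →ᵇ ℝ, U ((2 : ℝ) • z) = 2 * U z := by
    intro z
    have h1 := hmix ((2 : ℝ) • z) 0 (1/2) (by norm_num) (by norm_num)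
    have h2 : (1/2 : ℝ) • ((2 : ℝ) • z) + (1 - 1/2 : ℝ) • ((0 : ℝ) • (1 : ℕ →ᵇ ℝ)) = z := by
      ext n; simp
    rw [h2] at h1
    linarith
  -- main
  intro x y
  set a := U x with ha
  set b := U y with hb
  -- translate y to certainty equivalent a
  set y' : ℕ →ᵇ ℝ := y + (a - b) • (1 : ℕ →ᵇ ℝ) with hy'
  have hy'2 : y' = (2 : ℝ) • ((1/2 : ℝ) • y + (1 - 1/2 : ℝ) • ((a - b) • (1 : ℕ →ᵇ ℝ))) := by
    ext n; simp [hy']; ring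
  have hUy' : U y' = a := by
    rw [hy'2, hdouble, hmix y (a - b) (1/2) (by norm_num) (by norm_num)]
    ring
  have hsim1 : R x y' := hRU x y' (by rw [hUy'])
  have hsim2 : R y' x := hRU y' x (by rw [hUy'])
  have hmid := hua x y' (1/2) (by norm_num) (by norm_num) ⟨hsim1, hsim2⟩
  have hmidU : a ≤ U ((1/2 : ℝ) • x + (1 - 1/2 : ℝ) • y') := hUle _ _ hmid
  have hmideq : (1/2 : ℝ) • x + (1 - 1/2 : ℝ) • y'
      = (1/2 : ℝ) • (x + y) + (1 - 1/2 : ℝ) • ((a - b) • (1 : ℕ →ᵇ ℝ)) := by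
    ext n; simp [hy']; ring
  rw [hmideq, hmix (x + y) (a - b) (1/2) (by norm_num) (by norm_num)] at hmidU
  linarith
end
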